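/- Let X ⊂ P^N be a non-degenerate scroll over a smooth curve. If the secant defect δ(X) = 2n + 1 − dim SX is positive, then SX = P^N. -/

import Mathlib

open MvPolynomial

noncomputable section

/-- Affine space `ℂ^{N+1}`. -/
abbrev Aff (N : ℕ) := Fin (N + 1) → ℂ

/-- Projective `N`-space over `ℂ`. -/
abbrev Proj (N : ℕ) := Projectivization ℂ (Aff N)

/-- Zariski-closed subsets of affine space: common zero loci of polynomials. -/
def zClosed {N : ℕ} (V : Set (Aff N)) : Prop :=
  ∃ S : Set (MvPolynomial (Fin (N + 1)) ℂ), V = {x | ∀ p ∈ S, eval x p = 0}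

/-- Zariski closure in affine space. -/
def zClosure {N : ℕ} (V : Set (Aff N)) : Set (Aff N) :=
  ⋂₀ {C | zClosed C ∧ V ⊆ C}

/-- Irreducibility of a subset of affine space w.r.t. the Zariski topology. -/
def zIrred {N : ℕ} (V : Set (Aff N)) : Prop :=
  V.Nonempty ∧ ∀ C₁ C₂ : Set (Aff N), zClosed C₁ → zClosed C₂ → V ⊆ C₁ ∪ C₂ →
    V ⊆ C₁ ∨ V ⊆ C₂

/-- Dimension of a subset of affine space: Krull dimension of the poset of
irreducible Zariski-closed subsets contained in it. -/
def adim {N : ℕ} (V : Set (Aff N)) : WithBot ℕ∞ :=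
  Order.krullDim {W : Set (Aff N) // zClosed W ∧ zIrred W ∧ W ⊆ V}

/-- The affine cone over a set of projective points. -/
def cone {N : ℕ} (X : Set (Proj N)) : Set (Aff N) :=
  {v | ∃ hv : v ≠ 0, Projectivization.mk ℂ v hv ∈ X} ∪ {0}

/-- A projectively closed set. -/
def pClosed {N : ℕ} (X : Set (Proj N)) : Prop := zClosed (cone X)

/-- Projective Zariski closure. -/
def pClosure {N : ℕ} (X : Set (Proj N)) : Set (Proj N) :=
  {z | z.rep ∈ zClosure (cone X)}

/-- The vanishing ideal (as a set of polynomials) of a subset of `ℂ^ι`. -/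
def vanishSet {ι : Type} [Fintype ι] (V : Set (ι → ℂ)) : Set (MvPolynomial ι ℂ) :=
  {p | ∀ v ∈ V, eval v p = 0}

/-- The differential of a polynomial at a point, as a linear form. -/
def polyDiff {ι : Type} [Fintype ι] (v : ι → ℂ) (p : MvPolynomial ι ℂ) :
    (ι → ℂ) →ₗ[ℂ] ℂ :=
  ∑ i, eval v (pderiv i p) • LinearMap.proj i

/-- The (embedded, affine) Zariski tangent space of `V` at `v`. -/
def tangentAt {ι : Type} [Fintype ι] (V : Set (ι → ℂ)) (v : ι → ℂ) :
    Submodule ℂ (ι → ℂ) :=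
  ⨅ p ∈ vanishSet V, LinearMap.ker (polyDiff v p)

/-- The affine cone over the embedded projective tangent space of `X` at `x`. -/
def projTangent {N : ℕ} (X : Set (Proj N)) (x : Proj N) : Submodule ℂ (Aff N) :=
  tangentAt (cone X) x.rep

/-- The embedded projective tangent space `T_x X ⊆ ℙ^N` as a set of points. -/
def tangentSet {N : ℕ} (X : Set (Proj N)) (x : Proj N) : Set (Proj N) :=
  {z | z.submodule ≤ projTangent X x}

/-- `X` is a closed irreducible smooth projective variety of dimension `n`
(the affine cone has dimension `n+1`, and every embedded tangent space has
linear dimension `n+1`). -/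
def SmoothVariety {N : ℕ} (X : Set (Proj N)) (n : ℕ) : Prop :=
  pClosed X ∧ zIrred (cone X) ∧ adim (cone X) = ((n + 1 : ℕ) : WithBot ℕ∞) ∧
    ∀ x ∈ X, Module.finrank ℂ (projTangent X x) = n + 1

/-- Non-degeneracy: `X` is contained in no hyperplane. -/
def Nondeg {N : ℕ} (X : Set (Proj N)) : Prop :=
  Submodule.span ℂ (cone X) = ⊤

/-- The projective line through two points (all of `ℙ^N` if they coincide... it
is the projectivization of the span of the two representatives). -/
def pline {N : ℕ} (x y : Proj N) : Set (Proj N) :=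
  {z | z.submodule ≤ x.submodule ⊔ y.submodule}

/-- The relative secant (join) variety `S(Y,X)`: closure of the union of the
lines joining a point of `Y` to a distinct point of `X`. -/
def joinVar {N : ℕ} (Y X : Set (Proj N)) : Set (Proj N) :=
  pClosure {z | ∃ y ∈ Y, ∃ x ∈ X, y ≠ x ∧ z ∈ pline y x}

/-- The secant variety `SX`. -/
def secantVar {N : ℕ} (X : Set (Proj N)) : Set (Proj N) := joinVar X X

/-- The relative tangent variety `T(Y,X) = ⋃_{y ∈ Y} T_y X`. -/
def relTangent {N : ℕ} (Y X : Set (Proj N)) : Set (Proj N) :=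
  ⋃ y ∈ Y, tangentSet X y

/-- The hyperplane (as a linear subspace of `ℂ^{N+1}`) with coordinate vector `a`. -/
def hypSub {N : ℕ} (a : Aff N) : Submodule ℂ (Aff N) :=
  LinearMap.ker (∑ i, a i • (LinearMap.proj i : (Aff N) →ₗ[ℂ] ℂ))

/-- The dual variety of `X`, identified with a subvariety of `ℙ^N` via
coordinates of hyperplanes: closure of the set of hyperplanes tangent to `X`
at some point. -/
def dualVar {N : ℕ} (X : Set (Proj N)) : Set (Proj N) :=
  pClosure {h | ∃ x ∈ X, projTangent X x ≤ hypSub h.rep}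

/-- The entry locus `Σ_z` of a point `z` of the secant variety. -/
def entryLocus {N : ℕ} (X : Set (Proj N)) (z : Proj N) : Set (Proj N) :=
  pClosure {x | x ∈ X ∧ ∃ x' ∈ X, x ≠ x' ∧ z ∈ pline x x'}

/-- A scroll structure on `X ⊆ ℙ^N`: a smooth base variety `W` (of dimension
`b`, embedded in some projective space) together with a family of disjoint
linearly embedded fibres of dimension `n - b` covering `X`. -/
structure ScrollOn (N : ℕ) (X : Set (Proj N)) (n b : ℕ) where
  M : ℕ
  W : Set (Proj M)
  baseSmooth : SmoothVariety W b
  fdim : ℕ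
  dim_eq : n = b + fdim
  Fsub : Proj M → Submodule ℂ (Aff N)
  fib_rank : ∀ w ∈ W, Module.finrank ℂ (Fsub w) = fdim + 1
  cover : X = ⋃ w ∈ W, {z : Proj N | z.submodule ≤ Fsub w}
  disjoint : ∀ w ∈ W, ∀ w' ∈ W, w ≠ w' →
    ∀ z : Proj N, z.submodule ≤ Fsub w → z.submodule ≤ Fsub w' → False

/-- The fibre of a scroll over a base point. -/
def ScrollOn.fib {N : ℕ} {X : Set (Proj N)} {n b : ℕ} (S : ScrollOn N X n b)
    (w : Proj S.M) : Set (Proj N) :=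
  {z | z.submodule ≤ S.Fsub w}

/-- The coordinate vector of the Segre product of two vectors. -/
def segreVec (a b : ℕ) (y : Fin a → ℂ) (w : Fin b → ℂ) : Fin a × Fin b → ℂ :=
  fun p => y p.1 * w p.2

/-- `X` is (projectively equivalent to) the Segre embedding
`ℙ^{a-1} × ℙ^{b-1} ⊆ ℙ^{ab-1}`. -/
def IsSegre {N : ℕ} (a b : ℕ) (X : Set (Proj N)) : Prop :=
  ∃ e : (Fin a × Fin b → ℂ) ≃ₗ[ℂ] (Aff N),
    X = {z | ∃ y : Fin a → ℂ, ∃ w : Fin b → ℂ,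
      z.submodule = Submodule.span ℂ {e (segreVec a b y w)}}

/-- `X` is an isomorphic projection of the Segre embedding
`ℙ^{a-1} × ℙ^{b-1}`: the image of the Segre variety under a linear projection
which is injective on points and on embedded tangent spaces of the Segre. -/
def IsProjectedSegre {N : ℕ} (a b : ℕ) (X : Set (Proj N)) : Prop :=
  ∃ L : (Fin a × Fin b → ℂ) →ₗ[ℂ] (Aff N),
    (∀ y w, segreVec a b y w ≠ 0 → L (segreVec a b y w) ≠ 0) ∧
    (∀ y w y' w', segreVec a b y w ≠ 0 → segreVec a b y' w' ≠ 0 →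
      Submodule.span ℂ {L (segreVec a b y w)} =
        Submodule.span ℂ {L (segreVec a b y' w')} →
      Submodule.span ℂ {segreVec a b y w} =
        Submodule.span ℂ {segreVec a b y' w'}) ∧
    (∀ y w, segreVec a b y w ≠ 0 →
      Disjoint
        (tangentAt {v | ∃ y' w', v = segreVec a b y' w'} (segreVec a b y w))
        (LinearMap.ker L)) ∧
    X = {z | ∃ y w, segreVec a b y w ≠ 0 ∧
      z.submodule = Submodule.span ℂ {L (segreVec a b y w)}}

end
noncomputable section

/-- The quadratic Veronese coordinates of a vector in `ℂ³`. -/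
def veroQ (y : Fin 3 → ℂ) : Fin 6 → ℂ :=
  ![y 0 * y 0, y 0 * y 1, y 0 * y 2, y 1 * y 1, y 1 * y 2, y 2 * y 2]

/-- `X` is (projectively equivalent to) the Veronese surface in `ℙ⁵`. -/
def IsVeroneseSurface {N : ℕ} (X : Set (Proj N)) : Prop :=
  ∃ h : N + 1 = 6, ∃ g : (Aff N) ≃ₗ[ℂ] (Aff N),
    X = {z | ∃ y : Fin 3 → ℂ, y ≠ 0 ∧
      z.submodule = Submodule.span ℂ {g fun i => veroQ y (Fin.cast h i)}}

/-- The coordinates of a pure spinor: `(1, x_{ij}, Pf_i(x))` for a skew matrix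
with upper entries `x i j` (`i < j`); the affine parametrization of the
10-dimensional spinor variety `S₄ ⊆ ℙ^{15}`. -/
def spinVec (x : Fin 5 → Fin 5 → ℂ) : Fin 16 → ℂ :=
  ![1, x 0 1, x 0 2, x 0 3, x 0 4, x 1 2, x 1 3, x 1 4, x 2 3, x 2 4, x 3 4,
    x 1 2 * x 3 4 - x 1 3 * x 2 4 + x 1 4 * x 2 3,
    x 0 2 * x 3 4 - x 0 3 * x 2 4 + x 0 4 * x 2 3,
    x 0 1 * x 3 4 - x 0 3 * x 1 4 + x 0 4 * x 1 3,
    x 0 1 * x 2 4 - x 0 2 * x 1 4 + x 0 4 * x 1 2,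
    x 0 1 * x 2 3 - x 0 2 * x 1 3 + x 0 3 * x 1 2]

/-- `X` is (projectively equivalent to) the 10-dimensional spinor variety
`S₄ ⊆ ℙ^{15}`. -/
def IsSpinorVariety {N : ℕ} (X : Set (Proj N)) : Prop :=
  ∃ e : (Fin 16 → ℂ) ≃ₗ[ℂ] (Aff N),
    X = pClosure {z | ∃ x : Fin 5 → Fin 5 → ℂ,
      z.submodule = Submodule.span ℂ {e (spinVec x)}}

/-- The vanishing ideal of a subset of affine space. -/
def vanishIdeal {N : ℕ} (V : Set (Aff N)) : Ideal (MvPolynomial (Fin (N + 1)) ℂ) where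
  carrier := vanishSet V
  add_mem' := by intro a b ha hb v hv; simp [vanishSet] at *; simp [ha v hv, hb v hv]
  zero_mem' := by intro v hv; simp
  smul_mem' := by intro c a ha v hv; simp [vanishSet] at *; simp [ha v hv]

/-- Saturation of a homogeneous ideal with respect to the irrelevant ideal. -/
def satIdeal {N : ℕ} (J : Ideal (MvPolynomial (Fin (N + 1)) ℂ)) :
    Ideal (MvPolynomial (Fin (N + 1)) ℂ) where
  carrier := {p | ∃ k : ℕ, ∀ i : Fin (N + 1), (X i) ^ k * p ∈ J}
  zero_mem' := ⟨0, fun i => by simp⟩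
  add_mem' := by
    rintro a b ⟨k, hk⟩ ⟨l, hl⟩
    refine ⟨k + l, fun i => ?_⟩
    have h : (X i : MvPolynomial (Fin (N + 1)) ℂ) ^ (k + l) * (a + b) =
        (X i) ^ l * ((X i) ^ k * a) + (X i) ^ k * ((X i) ^ l * b) := by ring
    rw [h]
    exact J.add_mem (J.mul_mem_left _ (hk i)) (J.mul_mem_left _ (hl i))
  smul_mem' := by
    rintro c a ⟨k, hk⟩
    refine ⟨k, fun i => ?_⟩
    have h : (X i : MvPolynomial (Fin (N + 1)) ℂ) ^ k * (c • a) =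
        c * ((X i) ^ k * a) := by rw [smul_eq_mul]; ring
    rw [h]
    exact J.mul_mem_left _ (hk i)

/-- The projective scheme `Proj` of the quotient by `J` is normal: every
localization at a prime not containing the irrelevant ideal is a normal
domain. -/
def ProjNormal {N : ℕ} (J : Ideal (MvPolynomial (Fin (N + 1)) ℂ)) : Prop :=
  ∀ P : Ideal (MvPolynomial (Fin (N + 1)) ℂ ⧸ J), ∀ hP : P.IsPrime,
    ¬ (Ideal.map (Ideal.Quotient.mk J)
        (Ideal.span (Set.range MvPolynomial.X)) ≤ P) →
      IsDomain (@Localization.AtPrime _ _ P hP) ∧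
      IsIntegrallyClosed (@Localization.AtPrime _ _ P hP)

/-- Data describing an algebraic line bundle on `X ⊆ ℙ^N` by a covering of
`X` by complements of closed sets and degree-zero rational transition
functions satisfying the cocycle condition on `X`. -/
structure LineBundleData (N : ℕ) (X : Set (Proj N)) where
  ι : Type
  Z : ι → Set (Aff N)
  Zclosed : ∀ i, zClosed (Z i)
  covers : ∀ v ∈ cone X, v ≠ 0 → ∃ i, v ∉ Z i
  num : ι → ι → MvPolynomial (Fin (N + 1)) ℂ
  den : ι → ι → MvPolynomial (Fin (N + 1)) ℂ
  deg : ι → ι → ℕ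
  num_hom : ∀ i j, num i j ∈ homogeneousSubmodule (Fin (N + 1)) ℂ (deg i j)
  den_hom : ∀ i j, den i j ∈ homogeneousSubmodule (Fin (N + 1)) ℂ (deg i j)
  invertible : ∀ i j, ∀ v ∈ cone X, v ∉ Z i → v ∉ Z j →
    eval v (num i j) ≠ 0 ∧ eval v (den i j) ≠ 0
  cocycle : ∀ i j k, ∀ v ∈ cone X, v ∉ Z i → v ∉ Z j → v ∉ Z k →
    eval v (num i j) * eval v (num j k) * eval v (den i k) =
      eval v (num i k) * eval v (den i j) * eval v (den j k)

/-- The line bundle `L` is isomorphic to the `k`-th tensor power of `G`: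
on the common refinement of the two coverings, the transition functions of
`L` and the `k`-th power of those of `G` differ by a coboundary of invertible
degree-zero rational functions. -/
def PicPowerIso {N : ℕ} {X : Set (Proj N)} (L G : LineBundleData N X) (k : ℤ) : Prop :=
  ∃ a : L.ι × G.ι → MvPolynomial (Fin (N + 1)) ℂ,
  ∃ b : L.ι × G.ι → MvPolynomial (Fin (N + 1)) ℂ,
  ∃ d : L.ι × G.ι → ℕ,
    (∀ r, a r ∈ homogeneousSubmodule (Fin (N + 1)) ℂ (d r)) ∧
    (∀ r, b r ∈ homogeneousSubmodule (Fin (N + 1)) ℂ (d r)) ∧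
    (∀ i p, ∀ v ∈ cone X, v ∉ L.Z i → v ∉ G.Z p →
      eval v (a (i, p)) ≠ 0 ∧ eval v (b (i, p)) ≠ 0) ∧
    (∀ i j p q, ∀ v ∈ cone X, v ∉ L.Z i → v ∉ L.Z j → v ∉ G.Z p → v ∉ G.Z q →
      eval v (L.num i j) * eval v (b (i, p)) * eval v (a (j, q)) *
          eval v (G.den p q) ^ k.toNat * eval v (G.num p q) ^ (-k).toNat =
        eval v (L.den i j) * eval v (a (i, p)) * eval v (b (j, q)) *
          eval v (G.num p q) ^ k.toNat * eval v (G.den p q) ^ (-k).toNat)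

/-- The Picard group of `X` is cyclic: there is a line bundle of which every
line bundle is a tensor power, up to isomorphism. -/
def PicCyclic {N : ℕ} (X : Set (Proj N)) : Prop :=
  ∃ G : LineBundleData N X, ∀ L : LineBundleData N X, ∃ k : ℤ, PicPowerIso L G k

/-- `X` can be isomorphically projected into `ℙ^M`: there is a linear
projection which is injective on the points of `X` and on its embedded
tangent spaces. -/
def IsoProjectableTo {N : ℕ} (X : Set (Proj N)) (M : ℕ) : Prop :=
  ∃ π : (Aff N) →ₗ[ℂ] (Aff M),
    (∀ v ∈ cone X, v ≠ 0 → π v ≠ 0) ∧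
    (∀ v ∈ cone X, ∀ w ∈ cone X, v ≠ 0 → w ≠ 0 →
      Submodule.span ℂ {π v} = Submodule.span ℂ {π w} →
      Submodule.span ℂ {v} = Submodule.span ℂ {w}) ∧
    (∀ x ∈ X, projTangent X x ⊓ LinearMap.ker π = ⊥)

end

/-!
Let `C` be the affine cone over `X` and `F_w` the linear space of the fibre over `w`. The cone over
`SX` contains the closure `Σ` of `C + C`, which is irreducible. If `C + C` is not contained in the
closure `A` of `F_w + C` for some `w`, then for a second fibre `F_{w'}` a complete flag of the
`2n`-dimensional space `F_w ⊕ F_{w'}` followed by `F_w ⊕ F_{w'} ⊊ A ⊊ Σ` is a chain of irreducible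
closed sets of length `2n + 2`, contradicting `δ(X) > 0`. Otherwise translation by a vector of any
fibre maps `F_w + C` into `C + C`, hence `Σ` into itself; so `Σ` is stable under translation by the
span of `C`, which is everything since `X` is non-degenerate.
-/

open Set Pointwise Module

section Zariski

variable {N : ℕ}

lemma zClosed_iInter {ι : Sort*} {f : ι → Set (Aff N)} (hf : ∀ i, zClosed (f i)) :
    zClosed (⋂ i, f i) := by
  choose S hS using hf
  refine ⟨⋃ i, S i, ?_⟩
  ext x
  simp only [hS, mem_iInter, mem_ofPred_eq, mem_iUnion, forall_exists_index]
  exact forall_comm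

lemma zClosed_union {C D : Set (Aff N)} (hC : zClosed C) (hD : zClosed D) :
    zClosed (C ∪ D) := by
  obtain ⟨S, rfl⟩ := hC
  obtain ⟨T, rfl⟩ := hD
  refine ⟨(fun pq => pq.1 * pq.2) '' S ×ˢ T, ?_⟩
  ext x
  simp only [mem_union, mem_ofPred_eq, forall_mem_image, mem_prod, and_imp, Prod.forall,
    map_mul, mul_eq_zero]
  refine ⟨fun h p q hp hq => h.imp (fun h => h p hp) (fun h => h q hq), fun h => ?_⟩
  rw [or_iff_not_imp_left]
  intro hS
  push Not at hS
  obtain ⟨p, hp, hpx⟩ := hS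
  exact fun q hq => (h p q hp hq).resolve_left hpx

lemma zClosed_singleton (a : Aff N) : zClosed ({a} : Set (Aff N)) := by
  refine ⟨range fun i => X i - C (a i), ?_⟩
  ext x
  simp [sub_eq_zero, funext_iff]

lemma Set.Finite.zClosed {V : Set (Aff N)} (hV : V.Finite) : zClosed V := by
  induction V, hV using Set.Finite.induction_on with
  | empty => exact ⟨{1}, by simp⟩
  | insert _ _ ih => exact zClosed_union (zClosed_singleton _) ih

lemma zClosed_submodule (L : Submodule ℂ (Aff N)) : zClosed (L : Set (Aff N)) := by
  refine ⟨(fun φ : Dual ℂ (Aff N) => ∑ i, C (φ (Pi.single i 1)) * X i) ''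
    L.dualAnnihilator, ?_⟩
  have heval : ∀ (φ : Dual ℂ (Aff N)) x, eval x (∑ i, C (φ (Pi.single i 1)) * X i) = φ x := by
    intro φ x
    rw [φ.pi_apply_eq_sum_univ x, map_sum]
    refine Finset.sum_congr rfl fun i _ => ?_
    simp only [map_mul, eval_C, eval_X, smul_eq_mul, mul_comm]
    congr 2
    ext j
    simp [Pi.single_apply, eq_comm]
  ext x
  have hL := congrArg (x ∈ ·) (Subspace.dualAnnihilator_dualCoannihilator_eq (W := L))
  simp only [Submodule.mem_dualCoannihilator, Submodule.mem_dualAnnihilator] at hL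
  simp [heval, ← hL]

lemma eval_aeval {R σ : Type*} [CommSemiring R] (x : σ → R) (g : σ → MvPolynomial σ R)
    (p : MvPolynomial σ R) : eval x (aeval g p) = eval (fun i => eval x (g i)) p :=
  comp_aeval_apply (f := g) (aeval (R := R) x) p

lemma zClosed.preimage_eval {V : Set (Aff N)} (hV : zClosed V)
    (g : Fin (N + 1) → MvPolynomial (Fin (N + 1)) ℂ) :
    zClosed ((fun x i => eval x (g i)) ⁻¹' V) := by
  obtain ⟨S, rfl⟩ := hV
  refine ⟨aeval g '' S, ?_⟩
  ext x
  simp only [mem_preimage, mem_ofPred_eq, forall_mem_image, eval_aeval]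

lemma zClosed.preimage_add_left {V : Set (Aff N)} (hV : zClosed V) (c : Aff N) :
    zClosed ((c + ·) ⁻¹' V) := by
  convert hV.preimage_eval fun i => C (c i) + X i using 2
  ext x i
  simp

lemma zClosed.preimage_add_right {V : Set (Aff N)} (hV : zClosed V) (c : Aff N) :
    zClosed ((· + c) ⁻¹' V) := by
  simpa only [add_comm] using hV.preimage_add_left c

lemma zClosed.preimage_smul {V : Set (Aff N)} (hV : zClosed V) (a : ℂ) :
    zClosed ((a • ·) ⁻¹' V) := by
  convert hV.preimage_eval fun i => C a * X i using 2
  ext x i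
  simp

lemma subset_zClosure (V : Set (Aff N)) : V ⊆ zClosure V :=
  fun _ hv => mem_sInter.2 fun _ hC => hC.2 hv

lemma zClosure_subset {V W : Set (Aff N)} (hW : zClosed W) (h : V ⊆ W) : zClosure V ⊆ W :=
  sInter_subset_of_mem ⟨hW, h⟩

lemma zClosed_zClosure (V : Set (Aff N)) : zClosed (zClosure V) := by
  rw [zClosure, sInter_eq_iInter]
  exact zClosed_iInter fun C => C.2.1

lemma zClosure_mono {V W : Set (Aff N)} (h : V ⊆ W) : zClosure V ⊆ zClosure W :=
  zClosure_subset (zClosed_zClosure W) (h.trans (subset_zClosure W))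

lemma zClosure_mapsTo {V W : Set (Aff N)} {φ : Aff N → Aff N}
    (hφ : ∀ D, zClosed D → zClosed (φ ⁻¹' D)) (h : MapsTo φ V (zClosure W)) :
    MapsTo φ (zClosure V) (zClosure W) :=
  zClosure_subset (hφ _ (zClosed_zClosure W)) h

end Zariski

section Irreducible

variable {N : ℕ}

lemma zClosed.finite_setOf_add_smul_mem {V : Set (Aff N)} (hV : zClosed V) (a d : Aff N)
    {t₀ : ℂ} (ht₀ : a + t₀ • d ∉ V) : {t : ℂ | a + t • d ∈ V}.Finite := by
  obtain ⟨S, rfl⟩ := hV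
  simp only [mem_ofPred_eq, not_forall] at ht₀
  obtain ⟨p, hpS, hp⟩ := ht₀
  let q : Polynomial ℂ :=
    aeval (fun i => Polynomial.C (a i) + Polynomial.C (d i) * Polynomial.X) p
  have hq : ∀ t, q.eval t = eval (a + t • d) p := fun t => by
    rw [← Polynomial.coe_aeval_eq_eval, comp_aeval_apply, aeval_eq_eval]
    congr 2
    funext i
    simp only [map_add, map_mul, Polynomial.aeval_C, Polynomial.aeval_X, Pi.add_apply,
      Pi.smul_apply, smul_eq_mul, Algebra.algebraMap_self, RingHom.id_apply, mul_comm]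
  have hq0 : q ≠ 0 := fun h => hp (by rw [← hq, h, Polynomial.eval_zero])
  refine (Polynomial.finite_setOfPred_isRoot hq0).subset fun t ht => ?_
  rw [mem_ofPred_eq, Polynomial.IsRoot, hq]
  exact ht p hpS

lemma zIrred_submodule (L : Submodule ℂ (Aff N)) : zIrred (L : Set (Aff N)) := by
  refine ⟨⟨0, L.zero_mem⟩, fun C₁ C₂ h₁ h₂ hL => ?_⟩
  by_contra! h
  obtain ⟨a, haL, haC⟩ := not_subset.1 h.1
  obtain ⟨b, hbL, hbC⟩ := not_subset.1 h.2
  -- the line through `a` and `b` lies in `L` but meets each `Cᵢ` in finitely many points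
  have h₁fin := h₁.finite_setOf_add_smul_mem a (b - a) (t₀ := 0) (by simpa using haC)
  have h₂fin := h₂.finite_setOf_add_smul_mem a (b - a) (t₀ := 1) (by simpa using hbC)
  exact infinite_univ ((h₁fin.union h₂fin).subset fun t _ =>
    hL (L.add_mem haL (L.smul_mem t (L.sub_mem hbL haL))))

lemma zIrred.closure {V : Set (Aff N)} (h : zIrred V) : zIrred (zClosure V) :=
  ⟨h.1.mono (subset_zClosure V), fun C₁ C₂ h₁ h₂ hV =>
    (h.2 C₁ C₂ h₁ h₂ ((subset_zClosure V).trans hV)).imp (zClosure_subset h₁)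
      (zClosure_subset h₂)⟩

lemma zIrred.add {A B : Set (Aff N)} (hA : zIrred A) (hB : zIrred B) : zIrred (A + B) := by
  refine ⟨hA.1.add hB.1, fun C₁ C₂ h₁ h₂ hAB => ?_⟩
  -- each translate `a + B` lies in one `Cᵢ`, so `A` is covered by the closed sets
  -- `{a | a + B ⊆ Cᵢ}`
  have hK : ∀ C, zClosed C → zClosed {a | ∀ b ∈ B, a + b ∈ C} := fun C hC => by
    have hC' : {a | ∀ b ∈ B, a + b ∈ C} = ⋂ b ∈ B, (· + b) ⁻¹' C := by ext; simp
    rw [hC']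
    exact zClosed_iInter fun b => zClosed_iInter fun _ => hC.preimage_add_right b
  have hAK : A ⊆ {a | ∀ b ∈ B, a + b ∈ C₁} ∪ {a | ∀ b ∈ B, a + b ∈ C₂} := fun a ha =>
    hB.2 _ _ (h₁.preimage_add_left a) (h₂.preimage_add_left a) fun b hb =>
      hAB (add_mem_add ha hb)
  refine (hA.2 _ _ (hK C₁ h₁) (hK C₂ h₂) hAK).imp ?_ ?_ <;>
    rintro h _ ⟨a, ha, b, hb, rfl⟩ <;> exact h ha b hb

lemma zIrred.subsingleton_of_finite {V : Set (Aff N)} (h : zIrred V) (hV : V.Finite) :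
    V.Subsingleton := by
  intro x hx y hy
  have hsplit : V ⊆ {x} ∪ V \ {x} := by rw [union_sdiff_self]; exact subset_union_right
  rcases h.2 _ _ (zClosed_singleton x) (hV.sdiff).zClosed hsplit with h | h
  · exact (h hy).symm
  · exact absurd rfl (h hx).2

end Irreducible

section Dimension

variable {N : ℕ}

lemma finrank_add_two_le_adim {V A B : Set (Aff N)} (M : Submodule ℂ (Aff N))
    (hA : zClosed A) (hAi : zIrred A) (hB : zClosed B) (hBi : zIrred B)
    (hMA : (M : Set (Aff N)) ⊂ A) (hAB : A ⊂ B) (hBV : B ⊆ V) :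
    ((finrank ℂ M + 2 : ℕ) : WithBot ℕ∞) ≤ adim V := by
  let f : Submodule ℂ M → {W : Set (Aff N) // zClosed W ∧ zIrred W ∧ W ⊆ V} := fun L =>
    ⟨L.map M.subtype, zClosed_submodule _, zIrred_submodule _,
      fun x hx => hBV (hAB.subset (hMA.subset (Submodule.map_subtype_le M L hx)))⟩
  have hf : StrictMono f := fun L L' h =>
    SetLike.coe_ssubset_coe.2 (Submodule.map_strictMono_of_injective M.injective_subtype h)
  let a : {W : Set (Aff N) // zClosed W ∧ zIrred W ∧ W ⊆ V} :=
    ⟨A, hA, hAi, hAB.subset.trans hBV⟩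
  let b : {W : Set (Aff N) // zClosed W ∧ zIrred W ∧ W ⊆ V} := ⟨B, hB, hBi, hBV⟩
  have hMa : f ⊤ < a := by
    show ((⊤ : Submodule ℂ M).map M.subtype : Set (Aff N)) ⊂ A
    rwa [Submodule.map_subtype_top]
  have hab : a < b := hAB
  -- a flag of `M` has length `finrank ℂ M`; it continues with `M ⊂ A ⊂ B`
  have hM : (finrank ℂ M : ℕ∞) ≤ Order.height (f ⊤) := by
    rw [← Module.length_eq_finrank, Module.length_eq_height]
    exact Order.height_le_height_apply_of_strictMono f hf ⊤
  have hb : ((finrank ℂ M + 2 : ℕ) : ℕ∞) ≤ Order.height b := by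
    calc ((finrank ℂ M + 2 : ℕ) : ℕ∞) = finrank ℂ M + 1 + 1 := by push_cast; ring
      _ ≤ Order.height (f ⊤) + 1 + 1 := by gcongr
      _ ≤ Order.height a + 1 := by gcongr; exact Order.height_add_one_le hMa
      _ ≤ Order.height b := Order.height_add_one_le hab
  exact (WithBot.coe_le_coe.2 hb).trans (Order.height_le_krullDim b)

lemma adim_le_one_of_subset_span_singleton {V : Set (Aff N)} (v : Aff N) (hV : V ⊆ ℂ ∙ v) :
    adim V ≤ 1 := by
  refine Order.krullDim_le_one_iff.2 fun W => or_iff_not_imp_left.2 fun hmin W' hWW' => ?_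
  by_contra hW'W
  obtain ⟨W₀, hW₀W⟩ := not_isMin_iff.1 hmin
  obtain ⟨u, huW', huW⟩ := exists_of_ssubset (lt_of_le_not_ge hWW' hW'W : W.1 ⊂ W'.1)
  obtain ⟨s, rfl⟩ := Submodule.mem_span_singleton.1 (hV (W'.2.2.2 huW'))
  -- a proper closed subset of the line `ℂ ∙ v` is finite, hence a point if irreducible
  have hfin : W.1.Finite := by
    refine ((W.2.1.finite_setOf_add_smul_mem 0 v (t₀ := s) (by simpa using huW)).image
      (· • v)).subset fun w hw => ?_
    obtain ⟨t, rfl⟩ := Submodule.mem_span_singleton.1 (hV (W.2.2.2 hw))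
    exact ⟨t, by simpa using hw, rfl⟩
  obtain ⟨x, hx⟩ := W₀.2.2.1.1
  obtain ⟨y, hyW, hyW₀⟩ := exists_of_ssubset (hW₀W : W₀.1 ⊂ W.1)
  exact hyW₀ (W.2.2.1.subsingleton_of_finite hfin hyW (hW₀W.le hx) ▸ hx)

end Dimension

section Cone

variable {N : ℕ} {X Y : Set (Proj N)}

lemma zero_mem_cone : (0 : Aff N) ∈ cone X := Or.inr rfl

lemma mk_mem_of_mem_cone {v : Aff N} (hv : v ∈ cone X) (hv₀ : v ≠ 0) :
    Projectivization.mk ℂ v hv₀ ∈ X := by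
  obtain ⟨_, h⟩ | rfl := hv
  exacts [h, absurd rfl hv₀]

lemma smul_mem_cone {v : Aff N} (hv : v ∈ cone X) (a : ℂ) : a • v ∈ cone X := by
  obtain ha | ha := eq_or_ne a 0
  · rw [ha, zero_smul]; exact zero_mem_cone
  obtain ⟨hv₀, h⟩ | rfl := hv
  · refine Or.inl ⟨smul_ne_zero ha hv₀, ?_⟩
    rwa [(Projectivization.mk_eq_mk_iff' ℂ _ _ _ hv₀).2 ⟨a, rfl⟩]
  · rw [smul_zero]; exact zero_mem_cone

lemma cone_mono (h : X ⊆ Y) : cone X ⊆ cone Y := by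
  rintro v (⟨hv, hX⟩ | rfl)
  exacts [Or.inl ⟨hv, h hX⟩, zero_mem_cone]

lemma cone_singleton (z : Proj N) : cone {z} = z.submodule := by
  ext v
  constructor
  · rintro (⟨hv, rfl⟩ | rfl)
    · rw [SetLike.mem_coe, Projectivization.submodule_mk]
      exact Submodule.mem_span_singleton_self v
    · exact zero_mem _
  · intro hv
    obtain rfl | hv₀ := eq_or_ne v 0
    · exact zero_mem_cone
    rw [SetLike.mem_coe, z.submodule_eq, Submodule.mem_span_singleton] at hv
    obtain ⟨a, rfl⟩ := hv
    refine Or.inl ⟨hv₀, ?_⟩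
    rw [mem_singleton_iff, (Projectivization.mk_eq_mk_iff' ℂ _ _ _ z.rep_nonzero).2 ⟨a, rfl⟩,
      Projectivization.mk_rep]

lemma submodule_subset_cone {z : Proj N} (hz : z ∈ X) : (z.submodule : Set (Aff N)) ⊆ cone X :=
  cone_singleton z ▸ cone_mono (singleton_subset_iff.2 hz)

lemma exists_cone_subset_span_singleton (hX : X.Subsingleton) :
    ∃ v : Aff N, cone X ⊆ ℂ ∙ v := by
  obtain rfl | ⟨z, rfl⟩ := hX.eq_empty_or_singleton
  · exact ⟨0, by rintro v (⟨-, ⟨⟩⟩ | rfl); exact zero_mem _⟩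
  · exact ⟨z.rep, by rw [cone_singleton, z.submodule_eq]⟩

lemma zClosure_cone_subset_cone_pClosure (Y : Set (Proj N)) :
    zClosure (cone Y) ⊆ cone (pClosure Y) := by
  intro v hv
  obtain rfl | hv₀ := eq_or_ne v 0
  · exact zero_mem_cone
  refine Or.inl ⟨hv₀, ?_⟩
  obtain ⟨a, ha⟩ := Projectivization.exists_smul_eq_mk_rep ℂ v hv₀
  show (Projectivization.mk ℂ v hv₀).rep ∈ zClosure (cone Y)
  rw [← ha]
  exact zClosure_mapsTo (fun D hD => hD.preimage_smul (a : ℂ))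
    (fun w hw => subset_zClosure _ (smul_mem_cone hw (a : ℂ))) hv

end Cone

lemma nontrivial_of_one_lt_adim_cone {M : ℕ} {W : Set (Proj M)} (h : 1 < adim (cone W)) :
    W.Nontrivial := by
  by_contra hW
  obtain ⟨v, hv⟩ := exists_cone_subset_span_singleton (not_nontrivial_iff.1 hW)
  exact h.not_ge (adim_le_one_of_subset_span_singleton v hv)

section Secant

variable {N : ℕ} {X : Set (Proj N)}

def secantLines (X : Set (Proj N)) : Set (Proj N) :=
  {z | ∃ y ∈ X, ∃ x ∈ X, y ≠ x ∧ z ∈ pline y x}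

lemma exists_mem_submodule_of_mem_cone (hX : X.Nonempty) {v : Aff N} (hv : v ∈ cone X) :
    ∃ z ∈ X, v ∈ z.submodule := by
  obtain rfl | hv₀ := eq_or_ne v 0
  · obtain ⟨z, hz⟩ := hX
    exact ⟨z, hz, zero_mem _⟩
  refine ⟨_, mk_mem_of_mem_cone hv hv₀, ?_⟩
  rw [Projectivization.submodule_mk]
  exact Submodule.mem_span_singleton_self v

lemma mem_cone_secantLines {x y : Proj N} (hy : y ∈ X) (hx : x ∈ X) (hyx : y ≠ x) {v : Aff N}
    (hv : v ∈ y.submodule ⊔ x.submodule) : v ∈ cone (secantLines X) := by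
  obtain rfl | hv₀ := eq_or_ne v 0
  · exact zero_mem_cone
  refine Or.inl ⟨hv₀, y, hy, x, hx, hyx, ?_⟩
  show (Projectivization.mk ℂ v hv₀).submodule ≤ _
  rwa [Projectivization.submodule_mk, Submodule.span_singleton_le_iff_mem]

lemma cone_secantLines (hX : X.Nontrivial) : cone (secantLines X) = cone X + cone X := by
  refine Subset.antisymm ?_ ?_
  · rintro v (⟨hv₀, y, hy, x, hx, -, hv⟩ | rfl)
    · have hv' : v ∈ y.submodule ⊔ x.submodule := hv <| by
        rw [Projectivization.submodule_mk]
        exact Submodule.mem_span_singleton_self v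
      obtain ⟨a, ha, b, hb, rfl⟩ := Submodule.mem_sup.1 hv'
      exact add_mem_add (submodule_subset_cone hy ha) (submodule_subset_cone hx hb)
    · exact ⟨0, zero_mem_cone, 0, zero_mem_cone, add_zero 0⟩
  · rintro _ ⟨a, ha, b, hb, rfl⟩
    obtain ⟨y₁, hy₁, ha₁⟩ := exists_mem_submodule_of_mem_cone hX.nonempty ha
    obtain ⟨y₂, hy₂, hb₂⟩ := exists_mem_submodule_of_mem_cone hX.nonempty hb
    obtain rfl | hne := eq_or_ne y₁ y₂
    · obtain ⟨x, hx, hxy⟩ := hX.exists_ne y₁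
      exact mem_cone_secantLines hy₁ hx hxy.symm (Submodule.mem_sup_left (add_mem ha₁ hb₂))
    · exact mem_cone_secantLines hy₁ hy₂ hne
        (add_mem (Submodule.mem_sup_left ha₁) (Submodule.mem_sup_right hb₂))

lemma zClosure_add_subset_cone_secantVar (hX : X.Nontrivial) :
    zClosure (cone X + cone X) ⊆ cone (secantVar X) :=
  cone_secantLines hX ▸ zClosure_cone_subset_cone_pClosure (secantLines X)

lemma secantVar_eq_univ (hX : X.Nontrivial) (h : zClosure (cone X + cone X) = univ) :
    secantVar X = univ :=
  eq_univ_of_forall fun z => show z.rep ∈ zClosure (cone (secantLines X)) by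
    rw [cone_secantLines hX, h]
    trivial

end Secant

section Join

variable {N : ℕ}

lemma zClosure_add_self_eq_univ {C : Set (Aff N)} (h0 : (0 : Aff N) ∈ C)
    (hsmul : ∀ c ∈ C, ∀ a : ℂ, a • c ∈ C) (hspan : Submodule.span ℂ C = ⊤)
    (hcov : ∀ c ∈ C, ∃ F : Set (Aff N), (∀ f ∈ F, c + f ∈ C) ∧ C + C ⊆ zClosure (F + C)) :
    zClosure (C + C) = univ := by
  set T := zClosure (C + C)
  have hcont (c : Aff N) : ∀ D, zClosed D → zClosed ((c + ·) ⁻¹' D) :=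
    fun D hD => hD.preimage_add_left c
  have htrans : ∀ c ∈ C, MapsTo (c + ·) T T := by
    intro c hc
    obtain ⟨F, hF, hCC⟩ := hcov c hc
    have hFC : MapsTo (c + ·) (zClosure (F + C)) T := zClosure_mapsTo (hcont c) <| by
      rintro _ ⟨f, hf, c', hc', rfl⟩
      exact subset_zClosure _ ⟨c + f, hF f hf, c', hc', add_assoc c f c'⟩
    exact zClosure_mapsTo (hcont c) (hFC.mono_left hCC)
  have hspan' : ∀ x, MapsTo (x + ·) T T := by
    intro x
    have hx : x ∈ (Submodule.span ℂ C).toAddSubmonoid := hspan ▸ Submodule.mem_top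
    rw [Submodule.span_eq_closure] at hx
    induction hx using AddSubmonoid.closure_induction with
    | mem _ hx =>
      obtain ⟨a, -, c, hc, rfl⟩ := hx
      exact htrans _ (hsmul c hc a)
    | zero => exact fun u hu => by simpa using hu
    | add x y _ _ hx hy => simpa [MapsTo, add_assoc] using hx.comp hy
  exact eq_univ_of_forall fun x => by
    simpa using hspan' x (subset_zClosure _ (add_mem_add h0 h0))

lemma finrank_sup_add_two_le_adim {C V : Set (Aff N)} (hC : zIrred C)
    (hspan : Submodule.span ℂ C = ⊤) {F F' : Submodule ℂ (Aff N)} (hF : (F : Set (Aff N)) ⊆ C)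
    (hF' : (F' : Set (Aff N)) ⊆ C) (hCC : ¬ C + C ⊆ zClosure (F + C))
    (hV : zClosure (C + C) ⊆ V) :
    ((finrank ℂ ↥(F ⊔ F') + 2 : ℕ) : WithBot ℕ∞) ≤ adim V := by
  have hFF' : ((F ⊔ F' : Submodule ℂ (Aff N)) : Set (Aff N)) ⊆ zClosure (F + C) := by
    intro v hv
    obtain ⟨f, hf, f', hf', rfl⟩ := Submodule.mem_sup.1 hv
    exact subset_zClosure _ (add_mem_add hf (hF' hf'))
  have hCA : C ⊆ zClosure (F + C) := fun c hc =>
    subset_zClosure _ ⟨0, zero_mem F, c, hc, zero_add c⟩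
  -- the chain `F ⊔ F' ⊂ closure (F + C) ⊂ closure (C + C)`; the first inclusion is strict since
  -- otherwise `C ⊆ F ⊔ F'`, forcing `F ⊔ F' = ⊤`
  refine finrank_add_two_le_adim _ (zClosed_zClosure _) ((zIrred_submodule F).add hC).closure
    (zClosed_zClosure _) (hC.add hC).closure (hFF'.ssubset_of_not_subset fun hAM => hCC ?_)
    ((zClosure_mono (add_subset_add hF subset_rfl)).ssubset_of_not_subset
      fun h => hCC ((subset_zClosure _).trans h)) hV
  have htop : F ⊔ F' = ⊤ := by
    rw [eq_top_iff, ← hspan, Submodule.span_le]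
    exact hCA.trans hAM
  rw [htop, Submodule.top_coe] at hFF'
  exact (subset_univ _).trans hFF'

end Join

namespace ScrollOn

variable {N n b : ℕ} {X : Set (Proj N)} (S : ScrollOn N X n b) {w w' : Proj S.M}

lemma Fsub_subset_cone (hw : w ∈ S.W) : (S.Fsub w : Set (Aff N)) ⊆ cone X := by
  intro v hv
  obtain rfl | hv₀ := eq_or_ne v 0
  · exact zero_mem_cone
  refine Or.inl ⟨hv₀, S.cover ▸ mem_iUnion₂.2 ⟨w, hw, ?_⟩⟩
  show (Projectivization.mk ℂ v hv₀).submodule ≤ S.Fsub w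
  rwa [Projectivization.submodule_mk, Submodule.span_singleton_le_iff_mem]

lemma exists_mem_Fsub (hW : S.W.Nonempty) {v : Aff N} (hv : v ∈ cone X) :
    ∃ w ∈ S.W, v ∈ S.Fsub w := by
  obtain rfl | hv₀ := eq_or_ne v 0
  · obtain ⟨w, hw⟩ := hW
    exact ⟨w, hw, zero_mem _⟩
  have hmk := mk_mem_of_mem_cone hv hv₀
  rw [S.cover] at hmk
  obtain ⟨w, hw, hle⟩ := mem_iUnion₂.1 hmk
  refine ⟨w, hw, ?_⟩
  rwa [mem_ofPred_eq, Projectivization.submodule_mk, Submodule.span_singleton_le_iff_mem] at hle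

lemma Fsub_inf_Fsub (hw : w ∈ S.W) (hw' : w' ∈ S.W) (hne : w ≠ w') :
    S.Fsub w ⊓ S.Fsub w' = ⊥ := by
  refine eq_bot_iff.2 fun v hv => (Submodule.mem_bot ℂ).2 <| by_contra fun hv₀ => ?_
  refine S.disjoint w hw w' hw' hne (Projectivization.mk ℂ v hv₀) ?_ ?_ <;>
    rw [Projectivization.submodule_mk, Submodule.span_singleton_le_iff_mem]
  exacts [hv.1, hv.2]

lemma finrank_Fsub_sup_Fsub (hw : w ∈ S.W) (hw' : w' ∈ S.W) (hne : w ≠ w') :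
    finrank ℂ ↥(S.Fsub w ⊔ S.Fsub w') = 2 * (S.fdim + 1) := by
  have h := Submodule.finrank_sup_add_finrank_inf_eq (S.Fsub w) (S.Fsub w')
  rw [S.Fsub_inf_Fsub hw hw' hne, finrank_bot, S.fib_rank w hw, S.fib_rank w' hw'] at h
  omega

lemma exists_ne_zero_mem_Fsub (hw : w ∈ S.W) : ∃ v ∈ S.Fsub w, v ≠ 0 :=
  Submodule.exists_mem_ne_zero_of_ne_bot fun h => by
    have hrank := S.fib_rank w hw
    rw [h, finrank_bot] at hrank
    omega

lemma nontrivial (hW : S.W.Nontrivial) : X.Nontrivial := by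
  obtain ⟨w, hw, w', hw', hne⟩ := hW
  obtain ⟨v, hv, hv₀⟩ := S.exists_ne_zero_mem_Fsub hw
  obtain ⟨v', hv', hv'₀⟩ := S.exists_ne_zero_mem_Fsub hw'
  refine ⟨_, mk_mem_of_mem_cone (S.Fsub_subset_cone hw hv) hv₀,
    _, mk_mem_of_mem_cone (S.Fsub_subset_cone hw' hv') hv'₀, fun h => hv'₀ ?_⟩
  obtain ⟨a, rfl⟩ := (Projectivization.mk_eq_mk_iff' ℂ _ _ hv'₀ hv₀).1 h.symm
  simpa [S.Fsub_inf_Fsub hw hw' hne] using Submodule.mem_inf.2 ⟨(S.Fsub w).smul_mem a hv, hv'⟩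

end ScrollOn

/-- A non-degenerate scroll over a smooth curve with positive secant defect
(`δ(X) = 2n + 1 - dim SX > 0`, i.e. `adim (cone SX) < 2n + 2`) has
`SX = ℙ^N`. -/
theorem secant_full_of_curve_scroll_defective {N n : ℕ} (X : Set (Proj N))
    (hX : SmoothVariety X n) (hnd : Nondeg X) (S : ScrollOn N X n 1)
    (hdef : adim (cone (secantVar X)) < ((2 * n + 2 : ℕ) : WithBot ℕ∞)) :
    secantVar X = Set.univ := by
  have hW : S.W.Nontrivial := nontrivial_of_one_lt_adim_cone <| by
    rw [S.baseSmooth.2.2.1]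
    norm_num
  have hXnt : X.Nontrivial := S.nontrivial hW
  refine secantVar_eq_univ hXnt <| zClosure_add_self_eq_univ zero_mem_cone
    (fun c hc a => smul_mem_cone hc a) hnd fun c hc => ?_
  obtain ⟨w, hw, hcw⟩ := S.exists_mem_Fsub hW.nonempty hc
  refine ⟨S.Fsub w, fun f hf => S.Fsub_subset_cone hw (add_mem hcw hf), ?_⟩
  by_contra hCC
  obtain ⟨w', hw', hw'w⟩ := hW.exists_ne w
  refine hdef.not_ge ?_
  have h := finrank_sup_add_two_le_adim hX.2.1 hnd (S.Fsub_subset_cone hw)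
    (S.Fsub_subset_cone hw') hCC (zClosure_add_subset_cone_secantVar hXnt)
  rwa [S.finrank_Fsub_sup_Fsub hw hw' hw'w.symm, show 2 * (S.fdim + 1) = 2 * n by
    have := S.dim_eq; omega] at h
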